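/- arXiv:1710.09763 — 5 statements merged into one kernel-verified Lean document; each statement's English description precedes it below -/
import Mathlib

section
/- Let u, v ∈ [0,1] and let Π be a real number satisfying max(u+v−1, 0) ≤ Π ≤ min(u,v) (Fréchet–Hoeffding bounds). Then |Π − u·v| ≤ √(1−u)·√(1−v). -/
theorem stmt1 (u v P : ℝ) (hu : u ∈ Set.Icc (0:ℝ) 1) (hv : v ∈ Set.Icc (0:ℝ) 1)
    (hP1 : max (u + v - 1) 0 ≤ P) (hP2 : P ≤ min u v) :
    |P - u * v| ≤ Real.sqrt (1 - u) * Real.sqrt (1 - v) := by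
  obtain ⟨hu0, hu1⟩ := hu
  obtain ⟨hv0, hv1⟩ := hv
  have h1 : P ≤ u := le_trans hP2 (min_le_left _ _)
  have h2 : P ≤ v := le_trans hP2 (min_le_right _ _)
  have h3 : u + v - 1 ≤ P := le_trans (le_max_left _ _) hP1
  have h4 : (0:ℝ) ≤ P := le_trans (le_max_right _ _) hP1
  set a := Real.sqrt (1 - u) with ha
  set b := Real.sqrt (1 - v) with hb
  have ha0 : 0 ≤ a := Real.sqrt_nonneg _
  have hb0 : 0 ≤ b := Real.sqrt_nonneg _
  have ha2 : a ^ 2 = 1 - u := Real.sq_sqrt (by linarith)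
  have hb2 : b ^ 2 = 1 - v := Real.sq_sqrt (by linarith)
  have ha1 : a ≤ 1 := by nlinarith
  have hb1 : b ≤ 1 := by nlinarith
  rw [abs_le]
  constructor
  · nlinarith [sq_nonneg (a - b), sq_nonneg (a*b - 1), mul_nonneg ha0 hb0, mul_nonneg h4 hv0, mul_nonneg h4 hu0]
  · rcases le_total u v with h | h
    · have h5 : (u * b) ^ 2 ≤ a ^ 2 := by nlinarith [mul_nonneg (sq_nonneg u) (sub_nonneg.mpr h), mul_nonneg (mul_nonneg (sub_nonneg.mpr hu1) (sub_nonneg.mpr hu1)) (by linarith : (0:ℝ) ≤ 1 + u)]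
      have key : u * b ≤ a := by nlinarith [mul_nonneg hu0 hb0]
      nlinarith [mul_nonneg hu0 hb0, mul_le_mul_of_nonneg_right key hb0]
    · have h5 : (v * a) ^ 2 ≤ b ^ 2 := by nlinarith [mul_nonneg (sq_nonneg v) (sub_nonneg.mpr h), mul_nonneg (mul_nonneg (sub_nonneg.mpr hv1) (sub_nonneg.mpr hv1)) (by linarith : (0:ℝ) ≤ 1 + v)]
      have key : v * a ≤ b := by nlinarith [mul_nonneg hv0 ha0]
      nlinarith [mul_nonneg hv0 ha0, mul_le_mul_of_nonneg_right key ha0]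
end

section
/- Let l : (m,∞) → (0,∞) be twice continuously differentiable and slowly varying with x·l'(x) = ε₁(x)·l(x) where ε₁(x) → 0 and x·l'(x) ≥ l₁ for some constant l₁ > 1, and l''(x) ∼ −l'(x)/x as x → ∞. Then ρ = exp ∘ l is strictly convex on (l₂, ∞) for some l₂ > m. -/
open Filter Set

theorem deriv_deriv_exp_comp {f : ℝ → ℝ} {D : Set ℝ} (hD : IsOpen D) (hf : ContDiffOn ℝ 2 f D)
    {x : ℝ} (hx : x ∈ D) :
    deriv (deriv fun y => Real.exp (f y)) x
      = Real.exp (f x) * (deriv (deriv f) x + deriv f x ^ 2) := by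
  have hf' : ContDiffOn ℝ 1 (deriv f) D := hf.deriv_of_isOpen hD (by norm_num)
  have hasDeriv : ∀ y ∈ D, HasDerivAt f (deriv f y) y := fun y hy =>
    ((hf.differentiableOn (by norm_num)).differentiableAt (hD.mem_nhds hy)).hasDerivAt
  have hasDeriv' : HasDerivAt (deriv f) (deriv (deriv f) x) x :=
    ((hf'.differentiableOn one_ne_zero).differentiableAt (hD.mem_nhds hx)).hasDerivAt
  have hfirst : deriv (fun y => Real.exp (f y)) =ᶠ[nhds x] fun y => Real.exp (f y) * deriv f y := by
    filter_upwards [hD.mem_nhds hx] with y hy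
    exact (hasDeriv y hy).exp.deriv
  have hsecond : HasDerivAt (fun y => Real.exp (f y) * deriv f y)
      (Real.exp (f x) * deriv f x * deriv f x + Real.exp (f x) * deriv (deriv f) x) x :=
    (hasDeriv x hx).exp.mul hasDeriv'
  rw [hfirst.deriv_eq, hsecond.deriv]
  ring

theorem strictConvexOn_exp_comp {f : ℝ → ℝ} {D : Set ℝ} (hDc : Convex ℝ D) (hDo : IsOpen D)
    (hf : ContDiffOn ℝ 2 f D) (hpos : ∀ x ∈ D, 0 < deriv (deriv f) x + deriv f x ^ 2) :
    StrictConvexOn ℝ D fun x => Real.exp (f x) := by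
  refine strictConvexOn_of_deriv2_pos' hDc (hf.continuousOn.rexp) fun x hx => ?_
  rw [Function.iterate_succ_apply', Function.iterate_one, deriv_deriv_exp_comp hDo hf hx]
  exact mul_pos (Real.exp_pos _) (hpos x hx)

/-- Here `d₁ = l'(x)`, `d₂ = l''(x)`: then `d₂ > -c d₁/x` and `d₁² ≥ l₁ d₁/x`, so
`d₂ + d₁² > (l₁ - c) d₁/x > 0`. -/
theorem add_sq_pos_of_div_lt {x l₁ c d₁ d₂ : ℝ} (hx : 0 < x) (hl₁ : 0 < l₁) (hcl : c < l₁)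
    (hlow : l₁ ≤ x * d₁) (hratio : d₂ / (-d₁ / x) < c) : 0 < d₂ + d₁ ^ 2 := by
  have hd₁ : 0 < d₁ := pos_of_mul_pos_right (hl₁.trans_le hlow) hx.le
  have hd₂ : c * (-d₁ / x) < d₂ :=
    (div_lt_iff_of_neg (div_neg_of_neg_of_pos (neg_neg_of_pos hd₁) hx)).mp hratio
  have hsq : l₁ * d₁ / x ≤ d₁ ^ 2 := by
    rw [div_le_iff₀ hx]
    nlinarith
  have hgap : c * d₁ / x < l₁ * d₁ / x := by gcongr
  have : c * (-d₁ / x) = -(c * d₁ / x) := by ring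
  linarith

theorem eventually_deriv_deriv_add_deriv_sq_pos {l : ℝ → ℝ} {l₁ : ℝ} (hl₁ : 1 < l₁)
    (hlow : ∀ᶠ x in atTop, l₁ ≤ x * deriv l x)
    (hsecond : Tendsto (fun x => deriv (deriv l) x / (-(deriv l x) / x)) atTop (nhds 1)) :
    ∀ᶠ x in atTop, 0 < deriv (deriv l) x + deriv l x ^ 2 := by
  obtain ⟨c, hc1, hcl⟩ := exists_between hl₁
  filter_upwards [eventually_gt_atTop 0, hlow, hsecond.eventually_lt_const hc1]
    with x hx hxlow hratio
  exact add_sq_pos_of_div_lt hx (zero_lt_one.trans hl₁) hcl hxlow hratio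

theorem stmt15_general (m l₁ : ℝ) (hl₁ : 1 < l₁)
    (l : ℝ → ℝ)
    (hl : ContDiffOn ℝ 2 l (Set.Ioi m))
    (hlow : ∀ x ∈ Set.Ioi m, l₁ ≤ x * deriv l x)
    (hsecond : Filter.Tendsto (fun x => deriv (deriv l) x / (-(deriv l x) / x))
      Filter.atTop (nhds 1)) :
    ∃ l₂ > m, StrictConvexOn ℝ (Set.Ioi l₂) (fun x => Real.exp (l x)) := by
  have hpos := eventually_deriv_deriv_add_deriv_sq_pos hl₁
    ((eventually_gt_atTop m).mono hlow) hsecond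
  obtain ⟨A, hA⟩ := eventually_atTop.mp hpos
  refine ⟨max m A + 1, by linarith [le_max_left m A], ?_⟩
  have hsub : Ioi (max m A + 1) ⊆ Ioi m := Ioi_subset_Ioi (by linarith [le_max_left m A])
  refine strictConvexOn_exp_comp (convex_Ioi _) isOpen_Ioi (hl.mono hsub) fun x hx => hA x ?_
  linarith [le_max_right m A, mem_Ioi.mp hx]

theorem stmt15 (m l₁ : ℝ) (hm : 0 < m) (hl₁ : 1 < l₁)
    (l ε₁ : ℝ → ℝ)
    (hl : ContDiffOn ℝ 2 l (Set.Ioi m))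
    (hlpos : ∀ x ∈ Set.Ioi m, 0 < l x)
    (hslow : ∀ x ∈ Set.Ioi m, x * deriv l x = ε₁ x * l x)
    (hε : Filter.Tendsto ε₁ Filter.atTop (nhds 0))
    (hlow : ∀ x ∈ Set.Ioi m, l₁ ≤ x * deriv l x)
    (hsecond : Filter.Tendsto (fun x => deriv (deriv l) x / (-(deriv l x) / x))
      Filter.atTop (nhds 1)) :
    ∃ l₂ > m, StrictConvexOn ℝ (Set.Ioi l₂) (fun x => Real.exp (l x)) :=
  stmt15_general m l₁ hl₁ l hl hlow hsecond
end

section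
/- Let ψ : (m,∞) → ℝ be twice continuously differentiable, regularly varying of index γ₁ > 0 with ψ' monotone and ψ'(x) ∼ γ₁ψ(x)/x, and strictly increasing to infinity. Then for any 0 < γ₀ < γ₁ there exists M such that for all x large enough, (log ψ⁻¹)'(x) ≤ 1/(γ₀·x). -/
theorem stmt17 (m γ₁ : ℝ) (hm : 0 < m) (hγ₁ : 0 < γ₁)
    (ψ φ : ℝ → ℝ)
    (hψ : ContDiffOn ℝ 2 ψ (Set.Ioi m))
    (hregvar : ∀ c > (0:ℝ), Filter.Tendsto (fun x => ψ (c * x) / ψ x)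
      Filter.atTop (nhds (c ^ γ₁)))
    (hψ'mono : MonotoneOn (deriv ψ) (Set.Ioi m))
    (hψ'asym : Filter.Tendsto (fun x => deriv ψ x / (γ₁ * ψ x / x))
      Filter.atTop (nhds 1))
    (hψmono : StrictMonoOn ψ (Set.Ioi m))
    (hψtop : Filter.Tendsto ψ Filter.atTop Filter.atTop)
    (hinv : ∀ x ∈ Set.Ioi m, φ (ψ x) = x)
    (hrinv : ∀ᶠ y in Filter.atTop, ψ (φ y) = y) :
    ∀ γ₀, 0 < γ₀ → γ₀ < γ₁ → ∃ M : ℝ, ∀ x ≥ M,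
      deriv (fun y => Real.log (φ y)) x ≤ 1 / (γ₀ * x) := by
  intro γ₀ hγ₀ hγ01
  -- Collect eventual properties into one event
  have hratio : γ₀ / γ₁ < 1 := (div_lt_one hγ₁).2 hγ01
  have hev1 : ∀ᶠ x in Filter.atTop, γ₀ / γ₁ < deriv ψ x / (γ₁ * ψ x / x) :=
    hψ'asym.eventually (eventually_gt_nhds hratio)
  have hev2 : ∀ᶠ x in Filter.atTop, 0 < ψ x := hψtop.eventually_gt_atTop 0
  have hev3 : ∀ᶠ x in Filter.atTop, m < x := Filter.eventually_gt_atTop m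
  have hev4 : ∀ᶠ x in Filter.atTop, (0:ℝ) < x := Filter.eventually_gt_atTop 0
  have hev : ∀ᶠ x in Filter.atTop,
      m < x ∧ 0 < x ∧ 0 < ψ x ∧ γ₀ * ψ x ≤ deriv ψ x * x := by
    filter_upwards [hev1, hev2, hev3, hev4] with x h1 h2 h3 h4
    refine ⟨h3, h4, h2, ?_⟩
    have hpos : 0 < γ₁ * ψ x / x := by positivity
    have h1' : γ₀ / γ₁ * (γ₁ * ψ x / x) < deriv ψ x := (lt_div_iff₀ hpos).mp h1
    have heq : γ₀ / γ₁ * (γ₁ * ψ x / x) = γ₀ * ψ x / x := by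
      field_simp
    rw [heq] at h1'
    exact le_of_lt ((div_lt_iff₀ h4).mp h1')
  obtain ⟨a, ha⟩ := Filter.eventually_atTop.1 hev
  obtain ⟨ham, ha0, haψ, -⟩ := ha a le_rfl
  -- surjectivity of ψ above a
  have key : ∀ y, ψ a < y → ∃ x, a < x ∧ ψ x = y := by
    intro y hy
    obtain ⟨N, hN⟩ := Filter.eventually_atTop.1 (hψtop.eventually_ge_atTop y)
    set N' := max N a with hN'
    have haN : a ≤ N' := le_max_right _ _
    have hyN : y ≤ ψ N' := hN N' (le_max_left _ _)
    have hsub : Set.Icc a N' ⊆ Set.Ioi m := fun z hz => lt_of_lt_of_le ham hz.1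
    have := intermediate_value_Icc haN ((hψ.continuousOn).mono hsub)
    obtain ⟨x, hx, hxy⟩ := this ⟨hy.le, hyN⟩
    have hxm : m < x := lt_of_lt_of_le ham hx.1
    have hax : a < x := by
      rcases lt_or_eq_of_le hx.1 with h | h
      · exact h
      · exfalso; rw [← h] at hxy; exact absurd hxy (ne_of_lt hy)
    exact ⟨x, hax, hxy⟩
  -- φ is a genuine inverse above ψ a
  have hφ : ∀ y, ψ a < y → a < φ y ∧ ψ (φ y) = y := by
    intro y hy
    obtain ⟨x, hax, hxy⟩ := key y hy
    have hfx : φ y = x := by rw [← hxy]; exact hinv x (lt_trans ham hax)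
    rw [hfx, hxy]; exact ⟨hax, rfl⟩
  -- φ strictly monotone on Ioi (ψ a)
  have hφmono : StrictMonoOn φ (Set.Ioi (ψ a)) := by
    intro y₁ h₁ y₂ h₂ h12
    obtain ⟨hb1, he1⟩ := hφ y₁ h₁
    obtain ⟨hb2, he2⟩ := hφ y₂ h₂
    by_contra hc
    push_neg at hc
    have : ψ (φ y₂) ≤ ψ (φ y₁) :=
      hψmono.monotoneOn (lt_trans ham hb2) (lt_trans ham hb1) hc
    rw [he1, he2] at this
    exact absurd this (not_le.2 h12)
  refine ⟨ψ a + 1, fun y hy => ?_⟩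
  have hya : ψ a < y := lt_of_lt_of_le (by linarith) hy
  obtain ⟨haφ, heφ⟩ := hφ y hya
  have hmφ : m < φ y := lt_trans ham haφ
  obtain ⟨-, hφ0, hφψ, hφd⟩ := ha (φ y) haφ.le
  rw [heφ] at hφψ hφd
  have hy0 : 0 < y := by linarith [haψ]
  -- continuity of φ at y
  have hcont : ContinuousAt φ y := by
    refine hφmono.continuousAt_of_image_mem_nhds (Ioi_mem_nhds hya) ?_
    refine Filter.mem_of_superset (Ioi_mem_nhds haφ) ?_
    intro x hx
    have hxm : m < x := lt_trans ham hx
    have : ψ a < ψ x := hψmono ham hxm hx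
    exact ⟨ψ x, this, hinv x hxm⟩
  -- derivative of ψ at φ y
  have hψder : HasDerivAt ψ (deriv ψ (φ y)) (φ y) :=
    (((hψ.differentiableOn (by norm_num)).differentiableAt
      (Ioi_mem_nhds hmφ))).hasDerivAt
  have hdpos : 0 < deriv ψ (φ y) := by nlinarith
  have hfg : ∀ᶠ z in nhds y, ψ (φ z) = z := by
    filter_upwards [Ioi_mem_nhds hya] with z hz
    exact (hφ z hz).2
  have hder : HasDerivAt φ (deriv ψ (φ y))⁻¹ y :=
    HasDerivAt.of_local_left_inverse hcont hψder (ne_of_gt hdpos) hfg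
  have hlog : HasDerivAt (fun z => Real.log (φ z))
      ((deriv ψ (φ y))⁻¹ / φ y) y := hder.log (by positivity)
  rw [hlog.deriv]
  have h1 : (deriv ψ (φ y))⁻¹ / φ y = 1 / (deriv ψ (φ y) * φ y) := by
    rw [inv_eq_one_div, div_div]
  rw [h1]
  exact one_div_le_one_div_of_le (by positivity) (by nlinarith)
end

section
/- Let ψ : (m,∞) → ℝ be differentiable with x·ψ'(x) = ε₁(x)·ψ(x) where ε₁(x)·ψ(x) ≥ l₁ ≥ 1 for all x > m (slow variation case). Then ψ is strictly increasing on (m,∞) and (log ψ⁻¹)'(y) = 1/(ψ⁻¹(y)·ψ'(ψ⁻¹(y))) ≤ 1/l₁ for all y in the range of ψ. -/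
/-!
Since `x ψ' x = ε₁ x ψ x ≥ l₁ > 0` and `x > 0`, the derivative `ψ'` is positive, so `ψ` is strictly
increasing and, being continuous, maps a neighbourhood of `x` onto a neighbourhood of `ψ x`. There
`φ` is a continuous local inverse of `ψ`, so the inverse function theorem gives
`(log φ)'(ψ x) = 1 / (x ψ' x)`, which is at most `1 / l₁`.
-/

open Set Filter Topology

theorem StrictMonoOn.image_mem_nhds_of_continuousOn {α δ : Type*} [ConditionallyCompleteLinearOrder α]
    [TopologicalSpace α] [OrderTopology α] [DenselyOrdered α] [NoMinOrder α] [NoMaxOrder α]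
    [LinearOrder δ] [TopologicalSpace δ] [OrderClosedTopology δ]
    {f : α → δ} {s : Set α} {x : α} (hf : StrictMonoOn f s) (hs : s ∈ 𝓝 x)
    (hfc : ContinuousOn f s) : f '' s ∈ 𝓝 (f x) := by
  obtain ⟨a, b, hxab, hab_nhds, hab_sub⟩ := exists_Icc_mem_subset_of_mem_nhds hs
  have hx : x ∈ Ioo a b := by rwa [← interior_Icc, mem_interior_iff_mem_nhds]
  have hfx : f x ∈ Ioo (f a) (f b) :=
    ⟨hf (hab_sub ⟨le_rfl, hxab.1.trans hxab.2⟩) (hab_sub hxab) hx.1,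
     hf (hab_sub hxab) (hab_sub ⟨hxab.1.trans hxab.2, le_rfl⟩) hx.2⟩
  refine mem_of_superset (isOpen_Ioo.mem_nhds hfx) ?_
  calc Ioo (f a) (f b) ⊆ f '' Ioo a b :=
        intermediate_value_Ioo (hxab.1.trans hxab.2) (hfc.mono hab_sub)
    _ ⊆ f '' s := image_mono (Ioo_subset_Icc_self.trans hab_sub)

theorem HasDerivAt.log_of_local_left_inverse {f g : ℝ → ℝ} {f' a b : ℝ} (hg : ContinuousAt g a)
    (hga : g a = b) (hf : HasDerivAt f f' b) (hf' : f' ≠ 0) (hb : b ≠ 0)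
    (hfg : ∀ᶠ y in 𝓝 a, f (g y) = y) :
    HasDerivAt (fun y => Real.log (g y)) (1 / (b * f')) a := by
  subst hga
  have := (HasDerivAt.of_local_left_inverse hg hf hf' hfg).log hb
  convert this using 1
  field_simp

theorem stmt18 (m l₁ : ℝ) (hm : 0 < m) (hl₁ : 1 ≤ l₁)
    (ψ ψ' φ ε₁ : ℝ → ℝ)
    (hderiv : ∀ x ∈ Set.Ioi m, HasDerivAt ψ (ψ' x) x)
    (hslow : ∀ x ∈ Set.Ioi m, x * ψ' x = ε₁ x * ψ x)
    (hlow : ∀ x ∈ Set.Ioi m, l₁ ≤ ε₁ x * ψ x)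
    (hinv : ∀ x ∈ Set.Ioi m, φ (ψ x) = x)
    (hrinv : ∀ y ∈ ψ '' Set.Ioi m, ψ (φ y) = y)
    (hφcont : ContinuousOn φ (ψ '' Set.Ioi m)) :
    StrictMonoOn ψ (Set.Ioi m) ∧
    ∀ x ∈ Set.Ioi m,
      HasDerivAt (fun y => Real.log (φ y)) (1 / (φ (ψ x) * ψ' (φ (ψ x)))) (ψ x) ∧
      1 / (φ (ψ x) * ψ' (φ (ψ x))) ≤ 1 / l₁ := by
  have hl₁pos : 0 < l₁ := one_pos.trans_le hl₁
  have hpos : ∀ x ∈ Ioi m, 0 < x := fun x hx => hm.trans hx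
  have hlow' : ∀ x ∈ Ioi m, l₁ ≤ x * ψ' x := fun x hx => (hslow x hx).symm ▸ hlow x hx
  have hψ'pos : ∀ x ∈ Ioi m, 0 < ψ' x := fun x hx =>
    pos_of_mul_pos_right (hl₁pos.trans_le (hlow' x hx)) (hpos x hx).le
  have hcont : ContinuousOn ψ (Ioi m) := fun x hx => (hderiv x hx).continuousAt.continuousWithinAt
  have hmono : StrictMonoOn ψ (Ioi m) :=
    strictMonoOn_of_hasDerivWithinAt_pos (convex_Ioi m) hcont
      (by simpa using fun x hx => (hderiv x hx).hasDerivWithinAt) (by simpa using hψ'pos)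
  refine ⟨hmono, fun x hx => ?_⟩
  have hnhds : ψ '' Ioi m ∈ 𝓝 (ψ x) := hmono.image_mem_nhds_of_continuousOn (Ioi_mem_nhds hx) hcont
  rw [hinv x hx]
  exact ⟨(hderiv x hx).log_of_local_left_inverse (hφcont.continuousAt hnhds) (hinv x hx)
      (hψ'pos x hx).ne' (hpos x hx).ne' (eventually_of_mem hnhds hrinv),
    one_div_le_one_div_of_le hl₁pos (hlow' x hx)⟩
end

section
/- Let k_n = √n / (K_n · exp(l ∘ ψ⁻¹(log n + K_n))) where K_n → ∞ with K_n/log log n → 0, and suppose l ∘ ψ⁻¹(x) ≤ x/2 − θ log x + K for all large x, with θ > 1. Then for every θ' ∈ (1, θ), k_n ≥ (log n)^{θ'} for all n large enough; in particular k_n/log log n → ∞ and k_n/√n → 0. -/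
/-!
Write `L = log n`. The bound on `g` gives `exp (g (L + K)) ≤ exp ((L + K) / 2 + C) / (L + K) ^ θ`,
so `k n ≥ L ^ θ / (K * exp (K / 2 + C)) ≥ L ^ θ / exp (3 / 2 * K + C)`. As `K n = o(log L)`,
eventually `3 / 2 * K + C ≤ (θ - θ') * log L`, and the denominator is at most `L ^ (θ - θ')`.
Any exponent `θ' > 1` beats `log log n = log L`, and `k n / √n = 1 / (K n * exp (g _)) → 0`
because `g → ∞`.
-/

open Filter Real Asymptotics

lemma Asymptotics.IsLittleO.eventually_le_const_mul {α : Type*} {l : Filter α} {f g : α → ℝ}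
    {c : ℝ} (h : f =o[l] g) (hc : 0 < c) (hg : ∀ᶠ x in l, 0 ≤ g x) :
    ∀ᶠ x in l, f x ≤ c * g x := by
  filter_upwards [h.def hc, hg] with x hfx hgx
  rw [norm_of_nonneg hgx] at hfx
  exact (le_norm_self _).trans hfx

lemma tendsto_rpow_div_log_atTop {r : ℝ} (hr : 1 < r) :
    Tendsto (fun x => x ^ r / log x) atTop atTop := by
  refine tendsto_atTop_mono' atTop ?_ (tendsto_id.const_mul_atTop (sub_pos.2 hr))
  filter_upwards [eventually_gt_atTop 1] with x hx
  have hlog : log x ≤ x ^ (r - 1) / (r - 1) := log_le_rpow_div (by linarith) (by linarith)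
  rw [id, le_div_iff₀ (log_pos hx)]
  calc (r - 1) * x * log x ≤ (r - 1) * x * (x ^ (r - 1) / (r - 1)) := by
        gcongr
    _ = x ^ r := by
        rw [rpow_sub_one (by linarith)]
        field_simp [(by linarith : r - 1 ≠ 0)]

lemma rpow_mul_exp_le_exp {x y θ C : ℝ} (hx : 0 < x) (hy : y ≤ x / 2 - θ * log x + C) :
    x ^ θ * exp y ≤ exp (x / 2 + C) := by
  rw [rpow_def_of_pos hx, ← exp_add]
  exact exp_le_exp.2 (by linarith)

lemma rpow_sub_le_exp_div {L K θ ε C y : ℝ} (hL : 0 < L) (hK : 0 < K) (hθ : 0 ≤ θ)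
    (hy : y ≤ (L + K) / 2 - θ * log (L + K) + C) (hKC : 3 / 2 * K + C ≤ ε * log L) :
    L ^ (θ - ε) ≤ exp (L / 2) / (K * exp y) := by
  have hLK : L ^ θ * exp y ≤ exp ((L + K) / 2 + C) :=
    (mul_le_mul_of_nonneg_right (rpow_le_rpow hL.le (by linarith) hθ) (exp_pos y).le).trans
      (rpow_mul_exp_le_exp (by linarith) hy)
  have hε : exp (3 / 2 * K + C) ≤ L ^ ε := by
    rw [rpow_def_of_pos hL, mul_comm (log L)]
    exact exp_le_exp.2 hKC
  rw [rpow_sub hL, div_le_div_iff₀ (by positivity) (by positivity)]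
  calc L ^ θ * (K * exp y) = K * (L ^ θ * exp y) := by ring
    _ ≤ exp K * exp ((L + K) / 2 + C) :=
        mul_le_mul (by linarith [add_one_le_exp K]) hLK (by positivity) (exp_pos K).le
    _ = exp (L / 2) * exp (3 / 2 * K + C) := by rw [← exp_add, ← exp_add]; ring_nf
    _ ≤ exp (L / 2) * L ^ ε := by gcongr

lemma eventually_log_rpow_le_sqrt_div {θ θ' C x₀ : ℝ} {K : ℕ → ℝ} {g : ℝ → ℝ}
    (hθ : 0 ≤ θ) (hθ' : θ' < θ) (hKtop : Tendsto K atTop atTop)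
    (hKsmall : K =o[atTop] fun n : ℕ => log (log n))
    (hg : ∀ x ≥ x₀, g x ≤ x / 2 - θ * log x + C) :
    ∀ᶠ n : ℕ in atTop, log n ^ θ' ≤ √n / (K n * exp (g (log n + K n))) := by
  have hL : Tendsto (fun n : ℕ => log n) atTop atTop :=
    tendsto_log_atTop.comp tendsto_natCast_atTop_atTop
  have hLL : Tendsto (fun n : ℕ => log (log n)) atTop atTop := tendsto_log_atTop.comp hL
  have hsmall : (fun n => 3 / 2 * K n + C) =o[atTop] fun n : ℕ => log (log n) :=
    (hKsmall.const_mul_left _).add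
      (isLittleO_const_left.2 (Or.inr (tendsto_norm_atTop_atTop.comp hLL)))
  filter_upwards [eventually_gt_atTop 0, hL.eventually_gt_atTop 0, hKtop.eventually_gt_atTop 0,
    (hL.atTop_add_atTop hKtop).eventually_ge_atTop x₀,
    hsmall.eventually_le_const_mul (sub_pos.2 hθ') (hLL.eventually_ge_atTop 0)]
    with n hn hLn hKn hx₀ hKC
  have hsqrt : √(n : ℝ) = exp (log n / 2) := by
    rw [sqrt_eq_rpow, rpow_def_of_pos (by exact_mod_cast hn)]
    ring_nf
  have := rpow_sub_le_exp_div hLn hKn hθ (hg _ hx₀) hKC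
  rwa [sub_sub_cancel, ← hsqrt] at this

theorem stmt19 (θ C x₀ : ℝ) (hθ : 1 < θ)
    (K : ℕ → ℝ) (hKtop : Tendsto K atTop atTop)
    (hKsmall : Tendsto (fun n : ℕ => K n / Real.log (Real.log n)) atTop (nhds 0))
    (g : ℝ → ℝ) (hgtop : Tendsto g atTop atTop)
    (hg : ∀ x ≥ x₀, g x ≤ x / 2 - θ * Real.log x + C)
    (k : ℕ → ℝ)
    (hk : ∀ n : ℕ, k n = Real.sqrt n / (K n * Real.exp (g (Real.log n + K n)))) :
    (∀ θ' : ℝ, 1 < θ' → θ' < θ →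
      ∀ᶠ n : ℕ in atTop, Real.log n ^ θ' ≤ k n) ∧
    Tendsto (fun n : ℕ => k n / Real.log (Real.log n)) atTop atTop ∧
    Tendsto (fun n : ℕ => k n / Real.sqrt n) atTop (nhds 0) := by
  obtain rfl : k = fun n : ℕ => √n / (K n * exp (g (log n + K n))) := funext hk
  have hL : Tendsto (fun n : ℕ => log n) atTop atTop :=
    tendsto_log_atTop.comp tendsto_natCast_atTop_atTop
  have hLL : Tendsto (fun n : ℕ => log (log n)) atTop atTop := tendsto_log_atTop.comp hL
  have hKo : K =o[atTop] fun n : ℕ => log (log n) :=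
    (isLittleO_iff_tendsto' ((hLL.eventually_ne_atTop 0).mono fun _ h h0 => absurd h0 h)).2
      hKsmall
  have lower (θ' : ℝ) (hθ' : θ' < θ) := eventually_log_rpow_le_sqrt_div (by linarith) hθ' hKtop hKo hg
  refine ⟨fun θ' _ hθ' => lower θ' hθ', ?_, ?_⟩
  · have hmid : 1 < (1 + θ) / 2 := by linarith
    refine tendsto_atTop_mono' _ ?_ ((tendsto_rpow_div_log_atTop hmid).comp hL)
    filter_upwards [lower ((1 + θ) / 2) (by linarith), hLL.eventually_gt_atTop 0] with n hn hpos
    exact div_le_div_of_nonneg_right hn hpos.le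
  · have hD : Tendsto (fun n : ℕ => K n * exp (g (log n + K n))) atTop atTop :=
      hKtop.atTop_mul_atTop₀ (tendsto_exp_atTop.comp (hgtop.comp (hL.atTop_add_atTop hKtop)))
    refine hD.inv_tendsto_atTop.congr' ?_
    filter_upwards [eventually_gt_atTop 0] with n hn
    have : √(n : ℝ) ≠ 0 := by positivity
    simp only [Pi.inv_apply]
    field_simp
end
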